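/- Let P be a fully polarised profile with an odd number n of agents (one subpopulation has (n+1)/2 agents with ranking ≻_1, the other has (n−1)/2 agents with the reversed ranking ≻_2). Let a be the top issue of ≻_1. Then the α-divisiveness of a under the normalized Copeland score with ℓ = 4 equals ((n²−1)/n²)^α. -/

import Mathlib

/-! In a fully polarised profile every pair `a, b` with `b ≠ a` splits the agents the same way:
the `k + 1` agents of ranking `r1` prefer `a`, the `k` agents of ranking `r2` prefer `b`. So each
summand of the divisiveness compares two unanimous subprofiles, in which `a` is the Condorcet winner
(Copeland score `1`) and the Condorcet loser (score `0`) respectively, with the same weight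
`(4 (k + 1) k / n²)^α = ((n² - 1) / n²)^α`, where `n = 2 k + 1`. -/

open Finset

/-- The sub-population of agents preferring issue `a` to issue `b`
(ranking `p i : I ≃ Fin m` gives 0-based positions, lower = more preferred). -/
def subpop {I A : Type*} [Fintype A] {m : ℕ}
    (p : A → I ≃ Fin m) (a b : I) : Finset A :=
  Finset.univ.filter fun i => p i a < p i b

/-- Restriction of a profile to a sub-population, as a multiset of rankings. -/
def restr {I A : Type*} {m : ℕ} (p : A → I ≃ Fin m) (X : Finset A) :
    Multiset (I ≃ Fin m) :=
  X.val.map p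

/-- Normalised Borda score of issue `a` in a (sub)profile `Q` over `m` issues. -/
noncomputable def bordaM {I : Type*} {m : ℕ}
    (Q : Multiset (I ≃ Fin m)) (a : I) : ℝ :=
  (Q.map fun r => (m : ℝ) - 1 - ((r a : ℕ) : ℝ)).sum /
    ((Multiset.card Q : ℝ) * ((m : ℝ) - 1))

/-- Normalised Copeland score of issue `a` in a (sub)profile `Q` over `m` issues. -/
noncomputable def copM {I : Type*} [Fintype I] [DecidableEq I] {m : ℕ}
    (Q : Multiset (I ≃ Fin m)) (a : I) : ℝ :=
  ((Finset.univ.filter fun b =>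
      b ≠ a ∧ Q.countP (fun r => r b < r a) < Q.countP (fun r => r a < r b)).card : ℝ) /
    ((m : ℝ) - 1)

/-- α-divisiveness of issue `a` w.r.t. scoring function `s`, normalising constant `ℓ`.
A summand is `0` whenever one of the two sub-populations is empty. -/
noncomputable def alphaDiv {I A : Type*} [Fintype I] [DecidableEq I] [Fintype A]
    {m : ℕ} (p : A → I ≃ Fin m) (s : Multiset (I ≃ Fin m) → I → ℝ)
    (α ℓ : ℝ) (a : I) : ℝ :=
  (1 / ((m : ℝ) - 1)) *
    ∑ b ∈ Finset.univ.erase a,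
      if 0 < (subpop p a b).card ∧ 0 < (subpop p b a).card then
        (ℓ * ((subpop p a b).card : ℝ) * ((subpop p b a).card : ℝ) /
            ((Fintype.card A : ℝ)) ^ 2) ^ α *
          |s (restr p (subpop p a b)) a - s (restr p (subpop p b a)) a|
      else 0

namespace Equiv

variable {I : Type*} {m : ℕ} (r : I ≃ Fin m) {a b : I}

lemma apply_lt_apply_of_val_eq_zero (ha : (r a : ℕ) = 0) (hb : b ≠ a) : r a < r b :=
  Fin.lt_def.2 (ha ▸ Nat.pos_of_ne_zero fun h => hb (r.injective (Fin.ext (h.trans ha.symm))))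

lemma apply_lt_apply_of_val_eq_sub_one (ha : (r a : ℕ) = m - 1) (hb : b ≠ a) : r b < r a :=
  lt_of_le_of_ne (Fin.le_def.2 (ha ▸ Nat.le_sub_one_of_lt (r b).isLt)) (r.injective.ne hb)

lemma card_filter_apply_lt_apply [Fintype I] (a : I) : #{b | r a < r b} = m - 1 - r a := by
  rw [← Fin.card_Ioi, ← card_map r.toEmbedding]
  congr 1
  ext x
  simp

end Equiv

lemma copM_replicate {I : Type*} [Fintype I] [DecidableEq I] {m n : ℕ} (hn : n ≠ 0)
    (r : I ≃ Fin m) (a : I) :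
    copM (Multiset.replicate n r) a = ((m - 1 - r a : ℕ) : ℝ) / ((m : ℝ) - 1) := by
  rw [copM, ← r.card_filter_apply_lt_apply a]
  congr 3
  ext b
  simp only [mem_filter, mem_univ, true_and, ← Multiset.coe_replicate, Multiset.coe_countP,
    List.countP_replicate, decide_eq_true_eq]
  constructor
  · rintro ⟨-, h⟩
    by_contra hab
    simp [hab] at h
  · intro hab
    exact ⟨fun h => hab.ne' (congrArg r h), by simp [hab, lt_asymm hab, Nat.pos_of_ne_zero hn]⟩

lemma restr_eq_replicate {I A : Type*} {m : ℕ} {p : A → I ≃ Fin m} {X : Finset A}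
    {r : I ≃ Fin m} (h : ∀ i ∈ X, p i = r) : restr p X = Multiset.replicate #X r := by
  rw [restr, Multiset.map_congr rfl h, Multiset.map_const']
  rfl

section Polarised

variable {I A : Type*} [Fintype A] {m : ℕ} {p : A → I ≃ Fin m} {r₁ r₂ : I ≃ Fin m}
  {q : A → Prop} [DecidablePred q]

lemma subpop_eq_filter_of_ite (hp : ∀ i, p i = if q i then r₁ else r₂) {a b : I}
    (h₁ : r₁ a < r₁ b) (h₂ : r₂ b < r₂ a) : subpop p a b = ({i | q i} : Finset A) := by
  ext i
  by_cases hi : q i <;> simp [subpop, hp i, hi, h₁, lt_asymm h₂]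

theorem alphaDiv_of_ite [Fintype I] [DecidableEq I] (hm : 2 ≤ m)
    (hp : ∀ i, p i = if q i then r₁ else r₂) {a : I}
    (htop : ∀ b ≠ a, r₁ a < r₁ b) (hbot : ∀ b ≠ a, r₂ b < r₂ a)
    (h₁ : 0 < #{i | q i}) (h₂ : 0 < #{i | ¬ q i}) (s : Multiset (I ≃ Fin m) → I → ℝ)
    (α ℓ : ℝ) :
    alphaDiv p s α ℓ a =
      (ℓ * #{i | q i} * #{i | ¬ q i} / (Fintype.card A : ℝ) ^ 2) ^ α *
        |s (Multiset.replicate #{i | q i} r₁) a - s (Multiset.replicate #{i | ¬ q i} r₂) a| := by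
  have hp' (i : A) : p i = if ¬ q i then r₂ else r₁ := by rw [hp i, ite_not]
  have hcard : (#(univ.erase a) : ℝ) = (m : ℝ) - 1 := by
    rw [card_erase_of_mem (mem_univ a), card_univ, Fintype.card_congr r₁, Fintype.card_fin,
      Nat.cast_sub (by omega), Nat.cast_one]
  have hm₁ : (m : ℝ) - 1 ≠ 0 := sub_ne_zero.2 (by exact_mod_cast (by omega : m ≠ 1))
  rw [alphaDiv, sum_eq_card_nsmul fun b hb => ?summand, nsmul_eq_mul, hcard]
  case summand =>
    have hba := ne_of_mem_erase hb
    rw [subpop_eq_filter_of_ite hp (htop b hba) (hbot b hba),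
      subpop_eq_filter_of_ite hp' (hbot b hba) (htop b hba), if_pos ⟨h₁, h₂⟩,
      restr_eq_replicate fun i hi => (hp i).trans (if_pos (mem_filter.1 hi).2),
      restr_eq_replicate fun i hi => (hp' i).trans (if_pos (mem_filter.1 hi).2)]
  field_simp

end Polarised

theorem stmt5_general {I : Type*} [Fintype I] [DecidableEq I] {m k : ℕ}
    (hm : 2 ≤ m) (hk : 1 ≤ k)
    (r1 r2 : I ≃ Fin m)
    (hrev : ∀ x : I, (r2 x : ℕ) = m - 1 - (r1 x : ℕ))
    (p : Fin (2 * k + 1) → I ≃ Fin m)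
    (hp : ∀ i : Fin (2 * k + 1), p i = if (i : ℕ) < k + 1 then r1 else r2)
    (a : I) (ha : (r1 a : ℕ) = 0)
    (α : ℝ) :
    alphaDiv p copM α 4 a =
      ((((2 * k + 1 : ℕ) : ℝ) ^ 2 - 1) / ((2 * k + 1 : ℕ) : ℝ) ^ 2) ^ α := by
  have hr2a : (r2 a : ℕ) = m - 1 := by rw [hrev a, ha, Nat.sub_zero]
  have hfirst : #{i : Fin (2 * k + 1) | (i : ℕ) < k + 1} = k + 1 := by
    rw [Fin.card_filter_val_lt]; omega
  have hsecond : #{i : Fin (2 * k + 1) | ¬ (i : ℕ) < k + 1} = k := by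
    rw [filter_not, card_sdiff_of_subset (filter_subset _ _), hfirst, card_univ, Fintype.card_fin]
    omega
  have hweight : (4 * ((k + 1 : ℕ) : ℝ) * (k : ℝ) / ((2 * k + 1 : ℕ) : ℝ) ^ 2) =
      (((2 * k + 1 : ℕ) : ℝ) ^ 2 - 1) / ((2 * k + 1 : ℕ) : ℝ) ^ 2 := by
    push_cast; ring
  have hm₁ : (m : ℝ) - 1 ≠ 0 := sub_ne_zero.2 (by exact_mod_cast (by omega : m ≠ 1))
  rw [alphaDiv_of_ite hm hp (fun b => r1.apply_lt_apply_of_val_eq_zero ha)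
      (fun b => r2.apply_lt_apply_of_val_eq_sub_one hr2a) (by omega) (by omega),
    hfirst, hsecond, Fintype.card_fin, hweight, copM_replicate k.succ_ne_zero,
    copM_replicate (by omega), ha, hr2a, Nat.sub_self, Nat.sub_zero,
    Nat.cast_sub (by omega : 1 ≤ m), Nat.cast_one, div_self hm₁]
  norm_num

/-- in a fully polarised profile with an odd number `n = 2k + 1` of agents
(`k + 1` agents with ranking `r1`, `k` with its reverse `r2`), the issue `a` top-ranked
in `r1` has α-divisiveness `((n² - 1)/n²)^α` under the normalised Copeland score, `ℓ = 4`. -/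
theorem stmt5 {I : Type*} [Fintype I] [DecidableEq I] {m k : ℕ}
    (hm : 2 ≤ m) (hcard : Fintype.card I = m) (hk : 1 ≤ k)
    (r1 r2 : I ≃ Fin m)
    (hrev : ∀ x : I, (r2 x : ℕ) = m - 1 - (r1 x : ℕ))
    (p : Fin (2 * k + 1) → I ≃ Fin m)
    (hp : ∀ i : Fin (2 * k + 1), p i = if (i : ℕ) < k + 1 then r1 else r2)
    (a : I) (ha : (r1 a : ℕ) = 0)
    (α : ℝ) (hα0 : 0 ≤ α) (hα1 : α ≤ 1) :
    alphaDiv p copM α 4 a =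
      ((((2 * k + 1 : ℕ) : ℝ) ^ 2 - 1) / ((2 * k + 1 : ℕ) : ℝ) ^ 2) ^ α :=
  stmt5_general hm hk r1 r2 hrev p hp a ha α
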